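/- arXiv:2002.05792 — 3 statements merged into one kernel-verified Lean document; each statement's English description precedes it below -/
import Mathlib

section
/- Let p ≥ 3 be an integer and λ ≥ 0. Let f : (0,∞) → ℝ be monotone non-increasing and such that for every integer m ≥ p, f is integrable with respect to χ²_m and the Poisson-mixture series Σ_{k≥0} e^{-λ/2}(λ/2)^k/k! · E_{χ²_{p+2k}}[|f|] and Σ_{k≥0} e^{-λ/2}(λ/2)^k/k! · E_{χ²_{p+2+2k}}[|f|] converge. Then E_{χ²_{p+2}(λ)}[f] ≤ E_{χ²_p(λ)}[f]. -/
open MeasureTheory ProbabilityTheory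

/-- The chi-square distribution with `m` degrees of freedom: the Gamma distribution
with shape `m/2` and rate `1/2`. -/
noncomputable def chiSq (m : ℕ) : Measure ℝ := gammaMeasure ((m : ℝ) / 2) (1 / 2)

/-- Expectation of `f` under the chi-square distribution with `m` degrees of freedom. -/
noncomputable def chiSqExp (m : ℕ) (f : ℝ → ℝ) : ℝ := ∫ u, f u ∂(chiSq m)

/-- Expectation of `f` under the noncentral chi-square distribution with `p` degrees of
freedom and noncentrality parameter `lam`, as a Poisson mixture of central chi-squares. -/
noncomputable def ncChiSqExp (p : ℕ) (lam : ℝ) (f : ℝ → ℝ) : ℝ :=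
  ∑' k : ℕ, (Real.exp (-(lam / 2)) * (lam / 2) ^ k / (Nat.factorial k)) * chiSqExp (p + 2 * k) f

/-!
The density of `χ²_{m+2}` is `x / m` times that of `χ²_m`. Hence
`E_{χ²_{m+2}}[f] - E_{χ²_m}[f] = E_{χ²_m}[(f x - f m) (x / m - 1)]`, because `x / m - 1` has
mean zero under `χ²_m`, and the integrand is nonpositive since `f` is non-increasing on the
support. So `E_{χ²_{m+2}}[f] ≤ E_{χ²_m}[f]` for every `m ≥ 1`, and the theorem follows by comparing
the two Poisson mixtures term by term.
-/

open Set

lemma AntitoneOn.sub_mul_sub_nonneg {f : ℝ → ℝ} {s : Set ℝ} (hf : AntitoneOn f s) {x c : ℝ}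
    (hx : x ∈ s) (hc : c ∈ s) : 0 ≤ (f x - f c) * (c - x) := by
  rcases le_total x c with hxc | hcx
  · exact mul_nonneg (sub_nonneg.2 (hf hx hc hxc)) (sub_nonneg.2 hxc)
  · exact mul_nonneg_of_nonpos_of_nonpos (sub_nonpos.2 (hf hc hx hcx)) (sub_nonpos.2 hcx)

lemma integral_mul_le_integral_mul_of_sub_mul_sub_nonneg {α : Type*} [MeasurableSpace α]
    {μ : Measure α} {f g h : α → ℝ} (c : ℝ) (hg : Integrable g μ) (hh : Integrable h μ)
    (hgf : Integrable (fun x => g x * f x) μ) (hhf : Integrable (fun x => h x * f x) μ)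
    (hgh : ∫ x, g x ∂μ = ∫ x, h x ∂μ) (hsign : 0 ≤ᵐ[μ] fun x => (f x - c) * (g x - h x)) :
    ∫ x, h x * f x ∂μ ≤ ∫ x, g x * f x ∂μ := by
  have hgfhf : Integrable (fun x => g x * f x - h x * f x) μ := hgf.sub hhf
  have hcgh : Integrable (fun x => c * (g x - h x)) μ := (hg.sub hh).const_mul c
  have hexpand : ∫ x, (f x - c) * (g x - h x) ∂μ =
      (∫ x, g x * f x ∂μ - ∫ x, h x * f x ∂μ) - c * (∫ x, g x ∂μ - ∫ x, h x ∂μ) := by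
    calc ∫ x, (f x - c) * (g x - h x) ∂μ
        = ∫ x, (g x * f x - h x * f x) - c * (g x - h x) ∂μ := by congr 1 with x; ring
      _ = _ := by
        rw [integral_sub hgfhf hcgh, integral_sub hgf hhf, integral_const_mul,
          integral_sub hg hh]
  have := integral_nonneg_of_ae hsign
  rw [hexpand, hgh, sub_self, mul_zero, sub_zero] at this
  linarith

section GammaDensity

variable {a r : ℝ}

lemma gammaPDFReal_add_one (ha : 0 < a) (hr : r ≠ 0) (x : ℝ) :
    gammaPDFReal (a + 1) r x = r / a * x * gammaPDFReal a r x := by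
  unfold gammaPDFReal
  split_ifs with hx
  · rw [add_sub_cancel_right, Real.Gamma_add_one ha.ne', Real.rpow_add_one hr]
    rcases hx.lt_or_eq with hx | rfl
    · rw [show a = a - 1 + 1 by ring, Real.rpow_add_one hx.ne', sub_add_cancel]
      field_simp
    · simp [Real.zero_rpow ha.ne']
  · ring

lemma measurable_gammaPDF (a r : ℝ) : Measurable (gammaPDF a r) :=
  (measurable_gammaPDFReal a r).ennreal_ofReal

lemma integral_gammaMeasure (ha : 0 < a) (hr : 0 < r) (f : ℝ → ℝ) :
    ∫ x, f x ∂gammaMeasure a r = ∫ x, gammaPDFReal a r x * f x := by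
  rw [gammaMeasure, integral_withDensity_eq_integral_toReal_smul
    (measurable_gammaPDF a r) (ae_of_all _ fun _ => ENNReal.ofReal_lt_top)]
  simp only [gammaPDF, ENNReal.toReal_ofReal (gammaPDFReal_nonneg ha hr _), smul_eq_mul]

lemma integrable_gammaMeasure_iff (ha : 0 < a) (hr : 0 < r) {f : ℝ → ℝ} :
    Integrable f (gammaMeasure a r) ↔ Integrable (fun x => gammaPDFReal a r x * f x) := by
  rw [gammaMeasure, integrable_withDensity_iff_integrable_smul'
    (measurable_gammaPDF a r) (ae_of_all _ fun _ => ENNReal.ofReal_lt_top)]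
  simp only [gammaPDF, ENNReal.toReal_ofReal (gammaPDFReal_nonneg ha hr _), smul_eq_mul]

lemma integrable_gammaPDFReal (ha : 0 < a) (hr : 0 < r) : Integrable (gammaPDFReal a r) := by
  have := isProbabilityMeasure_gammaMeasure ha hr
  simpa using (integrable_gammaMeasure_iff ha hr).1 (integrable_const (1 : ℝ))

lemma integral_gammaPDFReal (ha : 0 < a) (hr : 0 < r) : ∫ x, gammaPDFReal a r x = 1 := by
  have := isProbabilityMeasure_gammaMeasure ha hr
  simpa using (integral_gammaMeasure ha hr fun _ => 1).symm

end GammaDensity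

noncomputable def chiSqPDF (m : ℕ) (x : ℝ) : ℝ := gammaPDFReal ((m : ℝ) / 2) (1 / 2) x

section ChiSq

variable {m : ℕ}

lemma chiSqExp_eq_integral_chiSqPDF_mul (hm : 0 < m) (f : ℝ → ℝ) :
    chiSqExp m f = ∫ x, chiSqPDF m x * f x :=
  integral_gammaMeasure (by positivity) (by norm_num) f

lemma integrable_chiSq_iff (hm : 0 < m) {f : ℝ → ℝ} :
    Integrable f (chiSq m) ↔ Integrable (fun x => chiSqPDF m x * f x) :=
  integrable_gammaMeasure_iff (by positivity) (by norm_num)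

lemma integrable_chiSqPDF (hm : 0 < m) : Integrable (chiSqPDF m) :=
  integrable_gammaPDFReal (by positivity) (by norm_num)

lemma integral_chiSqPDF (hm : 0 < m) : ∫ x, chiSqPDF m x = 1 :=
  integral_gammaPDFReal (by positivity) (by norm_num)

lemma chiSqPDF_of_neg {x : ℝ} (hx : x < 0) : chiSqPDF m x = 0 := by
  simp [chiSqPDF, gammaPDFReal, hx.not_ge]

lemma chiSqPDF_add_two (hm : 0 < m) (x : ℝ) : chiSqPDF (m + 2) x = x / m * chiSqPDF m x := by
  have hshape : ((m + 2 : ℕ) : ℝ) / 2 = (m : ℝ) / 2 + 1 := by push_cast; ring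
  rw [chiSqPDF, hshape, gammaPDFReal_add_one (by positivity) (by norm_num), chiSqPDF]
  field_simp

theorem chiSqExp_add_two_le (hm : 0 < m) {f : ℝ → ℝ} (hf : AntitoneOn f (Ioi 0))
    (hfm : Integrable f (chiSq m)) (hfm₂ : Integrable f (chiSq (m + 2))) :
    chiSqExp (m + 2) f ≤ chiSqExp m f := by
  have hm' : (0 : ℝ) < m := Nat.cast_pos.2 hm
  rw [chiSqExp_eq_integral_chiSqPDF_mul hm, chiSqExp_eq_integral_chiSqPDF_mul (by omega)]
  refine integral_mul_le_integral_mul_of_sub_mul_sub_nonneg (f m) (integrable_chiSqPDF hm)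
    (integrable_chiSqPDF (by omega)) ((integrable_chiSq_iff hm).1 hfm)
    ((integrable_chiSq_iff (by omega)).1 hfm₂)
    (by rw [integral_chiSqPDF hm, integral_chiSqPDF (by omega)]) ?_
  -- at `x = 0` the sign may fail (for `m = 2` the density does not vanish there)
  filter_upwards [volume.ae_ne 0] with x hx
  rcases hx.lt_or_gt with hx | hx
  · simp [chiSqPDF_of_neg hx]
  · have hcross := hf.sub_mul_sub_nonneg (mem_Ioi.2 hx) (mem_Ioi.2 hm')
    have hd : 0 ≤ chiSqPDF m x := gammaPDFReal_nonneg (by positivity) (by norm_num) x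
    calc (0 : ℝ) ≤ chiSqPDF m x / m * ((f x - f m) * (m - x)) := by positivity
      _ = (f x - f m) * (chiSqPDF m x - chiSqPDF (m + 2) x) := by
        rw [chiSqPDF_add_two hm]; field_simp

end ChiSq

lemma summable_mul_integral_of_summable_mul_integral_abs {α : Type*} [MeasurableSpace α]
    {μ : ℕ → Measure α} {w : ℕ → ℝ} {f : α → ℝ} (hw : ∀ k, 0 ≤ w k)
    (h : Summable fun k => w k * ∫ x, |f x| ∂μ k) : Summable fun k => w k * ∫ x, f x ∂μ k := by
  refine h.of_norm_bounded fun k => ?_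
  rw [norm_mul, Real.norm_of_nonneg (hw k)]
  exact mul_le_mul_of_nonneg_left (norm_integral_le_integral_norm f) (hw k)

theorem stmt_0 (p : ℕ) (hp : 3 ≤ p) (lam : ℝ) (hlam : 0 ≤ lam) (f : ℝ → ℝ)
    (hmono : AntitoneOn f (Set.Ioi (0 : ℝ)))
    (hint : ∀ m : ℕ, p ≤ m → Integrable f (chiSq m))
    (hsum1 : Summable (fun k : ℕ =>
      (Real.exp (-(lam / 2)) * (lam / 2) ^ k / (Nat.factorial k)) *
        chiSqExp (p + 2 * k) (fun u => |f u|)))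
    (hsum2 : Summable (fun k : ℕ =>
      (Real.exp (-(lam / 2)) * (lam / 2) ^ k / (Nat.factorial k)) *
        chiSqExp (p + 2 + 2 * k) (fun u => |f u|))) :
    ncChiSqExp (p + 2) lam f ≤ ncChiSqExp p lam f := by
  have hw : ∀ k : ℕ, 0 ≤ Real.exp (-(lam / 2)) * (lam / 2) ^ k / (Nat.factorial k) :=
    fun k => by positivity
  refine Summable.tsum_le_tsum (fun k => mul_le_mul_of_nonneg_left ?_ (hw k))
    (summable_mul_integral_of_summable_mul_integral_abs hw hsum2)
    (summable_mul_integral_of_summable_mul_integral_abs hw hsum1)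
  rw [show p + 2 + 2 * k = p + 2 * k + 2 by ring]
  exact chiSqExp_add_two_le (by omega) hmono (hint _ (by omega)) (hint _ (by omega))
end

section
/- For every positive integer n and every real c > 0, 1/(n+2+c) ≤ E_{χ²_{n+2}}[1/(u+c)] ≤ 1/(n+c). -/
/-!
Both bounds come from Jensen's inequality for the convex function `u ↦ 1 / (u + c)` on `[0, ∞)`,
applied to chi-square laws, whose mean is the number of degrees of freedom. For the lower bound
apply it to `χ²_{n+2}` directly. For the upper bound use that `χ²_{n+2}` is the size-biased `χ²_n`,
`dχ²_{n+2}(u) = (u / n) dχ²_n(u)`, so that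
`E_{χ²_{n+2}}[1 / (u + c)] = (1 / n) (1 - c E_{χ²_n}[1 / (u + c)])`; Jensen for `χ²_n` bounds the
right-hand side by `1 / (n + c)`. The argument works verbatim for Gamma laws: `Γ(a, r)` has mean
`a / r`, and `Γ(a + 1, r)` is the size-biased `Γ(a, r)`.
-/

open MeasureTheory ProbabilityTheory

open Real Set

namespace ProbabilityTheory

variable {a r : ℝ}

lemma gammaMeasure_ae_nonneg (a r : ℝ) : ∀ᵐ x ∂gammaMeasure a r, 0 ≤ x := by
  simp only [ae_iff, not_le]
  exact (withDensity_apply _ measurableSet_Iio).trans (lintegral_gammaPDF_of_nonpos le_rfl)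

lemma gammaPDF_add_one (ha : 0 < a) (hr : 0 < r) (x : ℝ) :
    gammaPDF (a + 1) r x = gammaPDF a r x * ENNReal.ofReal (r * x / a) := by
  rcases lt_or_ge x 0 with hx | hx
  · simp [gammaPDF_of_neg hx]
  have hxa : x ^ a = x ^ (a - 1) * x := by
    rw [← rpow_add_one' hx (by simp [ha.ne']), sub_add_cancel]
  rw [gammaPDF_of_nonneg hx, gammaPDF_of_nonneg hx, ← ENNReal.ofReal_mul (by positivity),
    add_sub_cancel_right, rpow_add_one hr.ne', Gamma_add_one ha.ne', hxa]
  congr 1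
  field_simp

lemma gammaMeasure_add_one (ha : 0 < a) (hr : 0 < r) :
    gammaMeasure (a + 1) r =
      (gammaMeasure a r).withDensity fun x => ENNReal.ofReal (r * x / a) := by
  have hmeas : Measurable (gammaPDF a r) := (measurable_gammaPDFReal a r).ennreal_ofReal
  rw [gammaMeasure, gammaMeasure, ← withDensity_mul _ hmeas (by fun_prop)]
  exact congrArg _ (funext (gammaPDF_add_one ha hr))

lemma integral_gammaMeasure_add_one (ha : 0 < a) (hr : 0 < r) (g : ℝ → ℝ) :
    ∫ x, g x ∂gammaMeasure (a + 1) r = ∫ x, r * x / a * g x ∂gammaMeasure a r := by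
  rw [gammaMeasure_add_one ha hr,
    integral_withDensity_eq_integral_toReal_smul (by fun_prop) (ae_of_all _ fun _ => by simp)]
  refine integral_congr_ae ?_
  filter_upwards [gammaMeasure_ae_nonneg a r] with x hx
  rw [ENNReal.toReal_ofReal (by positivity), smul_eq_mul]

lemma integrable_id_gammaMeasure (ha : 0 < a) (hr : 0 < r) :
    Integrable (fun x => x) (gammaMeasure a r) := by
  have := isProbabilityMeasure_gammaMeasure (by linarith : 0 < a + 1) hr
  have h := integrable_const (μ := gammaMeasure (a + 1) r) (1 : ℝ)
  rw [gammaMeasure_add_one ha hr, integrable_withDensity_iff_integrable_smul' (by fun_prop)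
    (ae_of_all _ fun _ => by simp)] at h
  refine (h.const_mul (a / r)).congr ?_
  filter_upwards [gammaMeasure_ae_nonneg a r] with x hx
  rw [ENNReal.toReal_ofReal (by positivity), smul_eq_mul]
  field_simp

lemma integral_id_gammaMeasure (ha : 0 < a) (hr : 0 < r) :
    ∫ x, x ∂gammaMeasure a r = a / r := by
  have := isProbabilityMeasure_gammaMeasure (by linarith : 0 < a + 1) hr
  have h := integral_gammaMeasure_add_one ha hr fun _ => 1
  simp_rw [integral_const, probReal_univ, one_smul, mul_one, mul_div_right_comm r] at h
  rw [integral_const_mul] at h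
  field_simp at h ⊢
  linarith

lemma integrable_inv_add_gammaMeasure (ha : 0 < a) (hr : 0 < r) {c : ℝ} (hc : 0 < c) :
    Integrable (fun x => (x + c)⁻¹) (gammaMeasure a r) := by
  have := isProbabilityMeasure_gammaMeasure ha hr
  refine (integrable_const c⁻¹).mono' (by fun_prop) ?_
  filter_upwards [gammaMeasure_ae_nonneg a r] with x hx
  rw [norm_of_nonneg (by positivity)]
  exact inv_anti₀ hc (by linarith)

lemma convexOn_inv_add {c : ℝ} (hc : 0 < c) : ConvexOn ℝ (Ici 0) fun x : ℝ => (x + c)⁻¹ := by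
  have h := ((convexOn_zpow (𝕜 := ℝ) (-1)).translate_right c).subset (s := Ici 0)
    (fun x (hx : 0 ≤ x) => show 0 < c + x by linarith) (convex_Ici 0)
  refine h.congr fun x _ => ?_
  simp [add_comm c]

lemma inv_add_le_integral_inv_add_gammaMeasure (ha : 0 < a) (hr : 0 < r) {c : ℝ} (hc : 0 < c) :
    (a / r + c)⁻¹ ≤ ∫ x, (x + c)⁻¹ ∂gammaMeasure a r := by
  have := isProbabilityMeasure_gammaMeasure ha hr
  have h := (convexOn_inv_add hc).map_integral_le (f := fun x => x)
    ((continuous_add_const c).continuousOn.inv₀ fun x (hx : 0 ≤ x) => by positivity)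
    isClosed_Ici (gammaMeasure_ae_nonneg a r) (integrable_id_gammaMeasure ha hr)
    (integrable_inv_add_gammaMeasure ha hr hc)
  rwa [integral_id_gammaMeasure ha hr] at h

lemma integral_inv_add_gammaMeasure_add_one_le (ha : 0 < a) (hr : 0 < r) {c : ℝ} (hc : 0 < c) :
    ∫ x, (x + c)⁻¹ ∂gammaMeasure (a + 1) r ≤ (a / r + c)⁻¹ := by
  have := isProbabilityMeasure_gammaMeasure ha hr
  calc ∫ x, (x + c)⁻¹ ∂gammaMeasure (a + 1) r
      = ∫ x, r / a * (1 - c * (x + c)⁻¹) ∂gammaMeasure a r := by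
        rw [integral_gammaMeasure_add_one ha hr]
        refine integral_congr_ae ?_
        filter_upwards [gammaMeasure_ae_nonneg a r] with x hx
        field_simp
        ring
    _ = r / a * (1 - c * ∫ x, (x + c)⁻¹ ∂gammaMeasure a r) := by
        rw [integral_const_mul, integral_sub (integrable_const 1)
          ((integrable_inv_add_gammaMeasure ha hr hc).const_mul c), integral_const_mul]
        simp
    _ ≤ r / a * (1 - c * (a / r + c)⁻¹) := by
        gcongr
        exact inv_add_le_integral_inv_add_gammaMeasure ha hr hc
    _ = (a / r + c)⁻¹ := by field_simp; ring

end ProbabilityTheory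

theorem stmt_2 (n : ℕ) (hn : 1 ≤ n) (c : ℝ) (hc : 0 < c) :
    1 / ((n : ℝ) + 2 + c) ≤ chiSqExp (n + 2) (fun u => 1 / (u + c)) ∧
    chiSqExp (n + 2) (fun u => 1 / (u + c)) ≤ 1 / ((n : ℝ) + c) := by
  have ha : (0 : ℝ) < n / 2 := div_pos (Nat.cast_pos.mpr hn) two_pos
  have hchiSq : chiSq (n + 2) = gammaMeasure ((n : ℝ) / 2 + 1) (1 / 2) := by
    rw [chiSq]; congr 1; push_cast; ring
  have hexp : chiSqExp (n + 2) (fun u => 1 / (u + c)) =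
      ∫ x, (x + c)⁻¹ ∂gammaMeasure ((n : ℝ) / 2 + 1) (1 / 2) := by
    simp only [chiSqExp, hchiSq, one_div]
  constructor
  · have h := inv_add_le_integral_inv_add_gammaMeasure (a := (n : ℝ) / 2 + 1) (by positivity)
      one_half_pos hc
    rw [hexp]; convert h using 1; field_simp
  · have h := integral_inv_add_gammaMeasure_add_one_le ha one_half_pos hc
    rw [hexp]; convert h using 1; field_simp
end

section
/- Let X ~ N_p(θ, σ²I_p) with θ ∈ ℝ^p, σ² > 0 and p ≥ 3. Then E[1/‖X‖²] = (1/σ²)·Σ_{k=0}^∞ e^{-λ}λ^k/k! · 1/(p−2+2k), where λ = ‖θ‖²/(2σ²); that is, E[1/‖X‖²] = (1/σ²)·E[1/(p−2+2K)] with K Poisson distributed with parameter ‖θ‖²/(2σ²). -/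
open MeasureTheory ProbabilityTheory
open Real Set Filter
open scoped ENNReal NNReal

/-! ### Auxiliary lemmas -/

lemma real_exp_tsum (y : ℝ) : Real.exp y = ∑' n : ℕ, y ^ n / (Nat.factorial n) := by
  rw [Real.exp_eq_exp_ℝ, NormedSpace.exp_eq_tsum_div]

lemma gauss_exp_sq (m : ℝ) {v : ℝ} (hv : 0 < v) {t : ℝ} (ht : 0 ≤ t) :
    ∫ x, Real.exp (-(t * x ^ 2)) ∂(gaussianReal m v.toNNReal)
      = Real.exp (-(t * m ^ 2) / (1 + 2 * v * t)) / Real.sqrt (1 + 2 * v * t) := by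
  have hA : (0:ℝ) < 1 + 2 * v * t := by positivity
  have hb : (0:ℝ) < t + 1 / (2 * v) := by positivity
  have hv' : v.toNNReal ≠ 0 := ne_of_gt (Real.toNNReal_pos.mpr hv)
  have hvv : ((v.toNNReal : ℝ)) = v := Real.coe_toNNReal _ hv.le
  rw [gaussianReal_of_var_ne_zero _ hv']
  have hpdf : gaussianPDF m v.toNNReal
      = fun x => ((gaussianPDFReal m v.toNNReal x).toNNReal : ℝ≥0∞) := by
    ext x; rfl
  rw [hpdf, integral_withDensity_eq_integral_smul
      ((measurable_gaussianPDFReal m v.toNNReal).real_toNNReal)]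
  have h1 : ∀ x : ℝ,
      (gaussianPDFReal m v.toNNReal x).toNNReal • Real.exp (-(t * x ^ 2))
      = ((Real.sqrt (2 * π * v))⁻¹ * Real.exp (-(t * m ^ 2) / (1 + 2 * v * t)))
        * Real.exp (-((t + 1 / (2 * v)) * (x - m / (1 + 2 * v * t)) ^ 2)) := by
    intro x
    rw [NNReal.smul_def, Real.coe_toNNReal _ (gaussianPDFReal_nonneg _ _ _)]
    simp only [gaussianPDFReal, hvv, smul_eq_mul]
    have key : -(x - m) ^ 2 / (2 * v) + -(t * x ^ 2)
        = -(t * m ^ 2) / (1 + 2 * v * t)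
          + -((t + 1 / (2 * v)) * (x - m / (1 + 2 * v * t)) ^ 2) := by
      field_simp
      ring
    rw [mul_assoc, ← Real.exp_add, key, Real.exp_add, ← mul_assoc]
  simp_rw [h1]
  rw [integral_const_mul]
  have h2 : ∫ x : ℝ, Real.exp (-((t + 1 / (2 * v)) * (x - m / (1 + 2 * v * t)) ^ 2))
      = Real.sqrt (π / (t + 1 / (2 * v))) := by
    rw [integral_sub_right_eq_self
      (fun x => Real.exp (-((t + 1 / (2 * v)) * x ^ 2))) (m / (1 + 2 * v * t))]
    simp_rw [← neg_mul]
    exact integral_gaussian _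
  rw [h2]
  rw [div_eq_mul_inv, mul_comm ((Real.sqrt (2 * π * v))⁻¹) _, mul_assoc]
  congr 1
  rw [← Real.sqrt_inv, ← Real.sqrt_mul (by positivity), ← Real.sqrt_inv]
  congr 1
  field_simp
  ring

/-- `N_p(θ, v I_p)`: the measure on `ℝ^p` under which the coordinates are independent
Gaussians, coordinate `i` having mean `θ i` and variance `v`. -/
noncomputable def normalPi (p : ℕ) (θ : Fin p → ℝ) (v : ℝ) : Measure (Fin p → ℝ) :=
  Measure.pi fun i => gaussianReal (θ i) v.toNNReal

lemma exp_neg_sum_sq (p : ℕ) (t : ℝ) (x : Fin p → ℝ) :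
    Real.exp (-(t * ∑ i, (x i) ^ 2)) = ∏ i, Real.exp (-(t * (x i) ^ 2)) := by
  rw [← Real.exp_sum]
  congr 1
  rw [Finset.mul_sum, ← Finset.sum_neg_distrib]

lemma pi_exp_sq (p : ℕ) (θ : Fin p → ℝ) {v : ℝ} (hv : 0 < v) (t : ℝ) :
    ∫ x, Real.exp (-(t * ∑ i, (x i) ^ 2)) ∂(normalPi p θ v)
      = ∏ i, ∫ y, Real.exp (-(t * y ^ 2)) ∂(gaussianReal (θ i) v.toNNReal) := by
  have h2 := MeasureTheory.integral_fintype_prod_eq_prod (𝕜 := ℝ) (ι := Fin p) (E := fun _ => ℝ)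
      (fun _ x => Real.exp (-(t * x ^ 2)))
      (μ := fun i => gaussianReal (θ i) v.toNNReal)
  simp_rw [exp_neg_sum_sq]
  exact h2

lemma pi_exp_sq_integrable (p : ℕ) (θ : Fin p → ℝ) {v : ℝ} (hv : 0 < v) {t : ℝ} (ht : 0 ≤ t) :
    Integrable (fun x => Real.exp (-(t * ∑ i, (x i) ^ 2))) (normalPi p θ v) := by
  have h2 := MeasureTheory.Integrable.fintype_prod_dep (𝕜 := ℝ) (ι := Fin p) (E := fun _ => ℝ)
      (f := fun _ x => Real.exp (-(t * x ^ 2)))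
      (μ := fun i => gaussianReal (θ i) v.toNNReal)
      (fun i => ?_)
  · simp_rw [exp_neg_sum_sq]; exact h2
  · show Integrable (fun x : ℝ => Real.exp (-(t * x ^ 2))) (gaussianReal (θ i) v.toNNReal)
    refine Integrable.mono' (integrable_const 1) ?_ ?_
    · exact (Real.continuous_exp.comp (by continuity)).aestronglyMeasurable
    · refine Filter.Eventually.of_forall fun x => ?_
      rw [Real.norm_eq_abs, abs_of_pos (Real.exp_pos _)]
      exact Real.exp_le_one_iff.mpr (by nlinarith [sq_nonneg x])

lemma hasDerivAt_aux {b s : ℝ} (hb : 0 < b) (hs : 1 < s) {x : ℝ} (hx : 0 ≤ x) :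
    HasDerivAt (fun t : ℝ => (1 + b * t) ^ (1 - s) / (b * (1 - s)))
      ((1 + b * x) ^ (-s)) x := by
  have hAx : (0:ℝ) < 1 + b * x := by positivity
  have h1 : HasDerivAt (fun t : ℝ => 1 + b * t) b x := by
    simpa using ((hasDerivAt_id x).const_mul b).const_add 1
  have h2 := (Real.hasDerivAt_rpow_const (p := 1 - s) (Or.inl hAx.ne')).comp x h1
  have h3 := h2.div_const (b * (1 - s))
  refine h3.congr_deriv ?_
  have hs' : (1:ℝ) - s ≠ 0 := by intro h; nlinarith
  rw [show (1:ℝ) - s - 1 = -s by ring]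
  field_simp

lemma tendsto_aux {b s : ℝ} (hb : 0 < b) (hs : 1 < s) :
    Tendsto (fun t : ℝ => (1 + b * t) ^ (1 - s) / (b * (1 - s))) atTop (nhds 0) := by
  rw [show (0:ℝ) = 0 / (b * (1-s)) by simp]
  apply Tendsto.div_const
  have h2 : Tendsto (fun t : ℝ => 1 + b * t) atTop atTop := by
    apply tendsto_atTop_add_const_left
    exact (tendsto_id.const_mul_atTop hb)
  have h3 := (tendsto_rpow_neg_atTop (y := s - 1) (by linarith)).comp h2
  simpa [Function.comp_def, show -(s-1) = 1 - s by ring] using h3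

lemma nonneg_aux {b s : ℝ} (hb : 0 < b) : ∀ x ∈ Ioi (0:ℝ), 0 ≤ (1 + b * x) ^ (-s) :=
  fun x hx => Real.rpow_nonneg (by have := (mem_Ioi.mp hx).le; positivity) _

lemma integrableOn_one_add_rpow {b s : ℝ} (hb : 0 < b) (hs : 1 < s) :
    IntegrableOn (fun t : ℝ => (1 + b * t) ^ (-s)) (Ioi (0:ℝ)) :=
  integrableOn_Ioi_deriv_of_nonneg
    ((hasDerivAt_aux hb hs le_rfl).continuousAt).continuousWithinAt
    (fun x hx => hasDerivAt_aux hb hs (mem_Ioi.mp hx).le) (nonneg_aux hb) (tendsto_aux hb hs)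

lemma integral_one_add_rpow {b s : ℝ} (hb : 0 < b) (hs : 1 < s) :
    ∫ t in Ioi (0:ℝ), (1 + b * t) ^ (-s) = 1 / (b * (s - 1)) := by
  rw [integral_Ioi_of_hasDerivAt_of_nonneg
    ((hasDerivAt_aux hb hs le_rfl).continuousAt).continuousWithinAt
    (fun x hx => hasDerivAt_aux hb hs (mem_Ioi.mp hx).le) (nonneg_aux hb) (tendsto_aux hb hs)]
  rw [mul_zero, add_zero, Real.one_rpow]
  have h1 : b * (1 - s) ≠ 0 := by intro h; rcases mul_eq_zero.mp h with h|h <;> nlinarith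
  have h2 : b * (s - 1) ≠ 0 := by intro h; rcases mul_eq_zero.mp h with h|h <;> nlinarith
  field_simp
  rw [show (1:ℝ) - s = -(s - 1) by ring, one_div_neg_eq_neg_one_div]; ring

lemma integral_exp_neg_Ioi_eq {r : ℝ} (hr : 0 < r) :
    ∫ t in Ioi (0:ℝ), Real.exp (-(t * r)) = 1 / r := by
  have hderiv : ∀ x ∈ Ioi (0:ℝ), HasDerivAt (fun t : ℝ => -(Real.exp (-(t * r)) / r))
      (Real.exp (-(x * r))) x := by
    intro x _
    have h1 : HasDerivAt (fun t : ℝ => -(t * r)) (-r) x := by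
      simpa using ((hasDerivAt_id x).mul_const r).fun_neg
    have h2 := (h1.exp.div_const r).neg
    refine h2.congr_deriv ?_
    field_simp
  rw [integral_Ioi_of_hasDerivAt_of_nonneg ?_ hderiv
    (fun x _ => (Real.exp_pos _).le) (l := 0) ?_]
  · simp
  · exact ((((hasDerivAt_id (0:ℝ)).mul_const r).neg.exp.div_const r).neg).continuousAt.continuousWithinAt
  · have h3 : Tendsto (fun t : ℝ => -(t * r)) atTop atBot :=
      Filter.tendsto_neg_atBot_iff.mpr (tendsto_id.atTop_mul_const hr)
    have h4 := (Real.tendsto_exp_atBot.comp h3).div_const r |>.neg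
    simpa using h4

lemma lint_exp {r : ℝ} (hr : 0 < r) :
    ∫⁻ t in Ioi (0:ℝ), ENNReal.ofReal (Real.exp (-(t * r))) = ENNReal.ofReal (1 / r) := by
  rw [← ofReal_integral_eq_lintegral_ofReal]
  · rw [integral_exp_neg_Ioi_eq hr]
  · have h := exp_neg_integrableOn_Ioi 0 hr
    refine h.congr_fun (fun x _ => by beta_reduce; rw [neg_mul, mul_comm]) measurableSet_Ioi
  · exact Filter.Eventually.of_forall fun x => (Real.exp_pos _).le

lemma step5 (p : ℕ) {σ2 T t : ℝ} (hσ2 : 0 < σ2) (ht : 0 < t) :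
    Real.exp (-(t * T) / (1 + 2 * σ2 * t)) / Real.sqrt (1 + 2 * σ2 * t) ^ p
    = ∑' k : ℕ, Real.exp (-(T / (2 * σ2))) * (T / (2 * σ2)) ^ k / (Nat.factorial k)
        * (1 + 2 * σ2 * t) ^ (-((p : ℝ) / 2) - k) := by
  set lam := T / (2 * σ2) with hlam
  set A := 1 + 2 * σ2 * t with hAdef
  have hA : (0:ℝ) < A := by positivity
  have hexp : -(t * T) / A = -lam + lam / A := by
    rw [hlam]
    field_simp
    ring
  have hsq : Real.sqrt A ^ p = A ^ ((p : ℝ) / 2) := by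
    rw [Real.sqrt_eq_rpow, ← Real.rpow_natCast (A ^ ((1:ℝ)/2)) p, ← Real.rpow_mul hA.le]
    rw [one_div, inv_mul_eq_div]
  rw [hexp, hsq, Real.exp_add, real_exp_tsum (lam / A)]
  rw [mul_comm (Real.exp (-lam)), ← tsum_mul_right, ← tsum_div_const]
  congr 1
  funext k
  have h1 : A ^ (-((p:ℝ)/2) - k) = (A ^ ((p:ℝ)/2))⁻¹ * (A ^ k)⁻¹ := by
    rw [Real.rpow_sub hA, Real.rpow_neg hA.le, Real.rpow_natCast, div_eq_mul_inv]
  rw [h1, div_pow]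
  have h2 : (A:ℝ) ^ k ≠ 0 := pow_ne_zero _ hA.ne'
  have h3 : A ^ ((p:ℝ)/2) ≠ 0 := (Real.rpow_pos_of_pos hA _).ne'
  field_simp

lemma prod_form (p : ℕ) (θ : Fin p → ℝ) (A t : ℝ) :
    (∏ i, (Real.exp (-(t * (θ i) ^ 2) / A) / Real.sqrt A))
      = Real.exp (-(t * ∑ i, (θ i) ^ 2) / A) / Real.sqrt A ^ p := by
  rw [Finset.prod_div_distrib, Finset.prod_const, Finset.card_univ, Fintype.card_fin,
    ← Real.exp_sum]
  congr 2
  rw [← Finset.sum_div]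
  congr 1
  rw [Finset.mul_sum, ← Finset.sum_neg_distrib]

lemma summable_ck_mul (lam C : ℝ) (u : ℕ → ℝ) (hu : ∀ k, |u k| ≤ C) :
    Summable fun k => Real.exp (-lam) * lam ^ k / (Nat.factorial k) * u k := by
  refine Summable.of_norm ?_
  refine Summable.of_nonneg_of_le (fun k => norm_nonneg _) (fun k => ?_)
    ((Real.summable_pow_div_factorial |lam|).mul_left (Real.exp (-lam) * C))
  rw [Real.norm_eq_abs, abs_mul, abs_div, abs_mul, abs_pow, Nat.abs_cast,
    abs_of_pos (Real.exp_pos _)]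
  have h1 : 0 ≤ Real.exp (-lam) * |lam| ^ k / (Nat.factorial k) := by positivity
  calc Real.exp (-lam) * |lam| ^ k / (Nat.factorial k) * |u k|
      ≤ Real.exp (-lam) * |lam| ^ k / (Nat.factorial k) * C := by
        exact mul_le_mul_of_nonneg_left (hu k) h1
    _ = Real.exp (-lam) * C * (|lam| ^ k / (Nat.factorial k)) := by ring

theorem stmt_16 (p : ℕ) (hp : 3 ≤ p) (θ : Fin p → ℝ) (σ2 : ℝ) (hσ2 : 0 < σ2)
    (lam : ℝ) (hlam : lam = (∑ i, (θ i) ^ 2) / (2 * σ2)) :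
    (∫ x, 1 / (∑ i, (x i) ^ 2) ∂(normalPi p θ σ2)) =
      (1 / σ2) * ∑' k : ℕ,
        Real.exp (-lam) * lam ^ k / (Nat.factorial k) * (1 / ((p : ℝ) - 2 + 2 * k)) := by
  have hv' : σ2.toNNReal ≠ 0 := ne_of_gt (Real.toNNReal_pos.mpr hσ2)
  set T : ℝ := ∑ i, (θ i) ^ 2 with hTdef
  have hT0 : 0 ≤ T := Finset.sum_nonneg fun i _ => sq_nonneg _
  have hlam0 : 0 ≤ lam := by rw [hlam]; positivity
  have hp3 : (3:ℝ) ≤ (p:ℝ) := by exact_mod_cast hp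
  set μ := normalPi p θ σ2 with hμ
  haveI : IsProbabilityMeasure μ := by
    rw [hμ]; unfold normalPi; infer_instance
  set S : (Fin p → ℝ) → ℝ := fun x => ∑ i, (x i) ^ 2 with hSdef
  have hSc : Continuous S := continuous_finset_sum _ fun i _ => (continuous_apply i).pow 2
  -- a.e. positivity of S
  have i0 : Fin p := ⟨0, by omega⟩
  have hsing : (gaussianReal (θ i0) σ2.toNNReal) {0} = 0 := by
    rw [gaussianReal_apply _ hv']
    exact setLIntegral_measure_zero _ _ (measure_singleton 0)
  have hnull : μ (Function.eval i0 ⁻¹' {(0:ℝ)}) = 0 :=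
    Measure.pi_eval_preimage_null _ hsing
  have h0 : ∀ᵐ x ∂μ, 0 < S x := by
    rw [ae_iff]
    refine measure_mono_null (fun x hx => ?_) hnull
    simp only [mem_setOf_eq, not_lt] at hx
    by_contra hne
    simp only [Set.mem_preimage, Set.mem_singleton_iff, Function.eval] at hne
    have hlt : 0 < S x :=
      lt_of_lt_of_le (lt_of_le_of_ne (sq_nonneg _) (Ne.symm (pow_ne_zero 2 hne)))
        (Finset.single_le_sum (fun i _ => sq_nonneg (x i)) (Finset.mem_univ i0))
    exact absurd (le_antisymm hx hlt.le) hlt.ne'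
  -- terms
  have hterm_nn : ∀ (u : ℕ → ℝ), (∀ k, 0 ≤ u k) →
      ∀ k : ℕ, 0 ≤ Real.exp (-lam) * lam ^ k / (Nat.factorial k) * u k := by
    intro u hu k
    have h1 := hu k
    positivity
  -- the key lintegral computation
  have key : ∫⁻ x, ENNReal.ofReal (1 / S x) ∂μ
      = ∑' k : ℕ, ENNReal.ofReal (Real.exp (-lam) * lam ^ k / (Nat.factorial k)
          * (1 / (2 * σ2 * ((p:ℝ) / 2 + k - 1)))) := by
    have e1 : ∫⁻ x, ENNReal.ofReal (1 / S x) ∂μ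
        = ∫⁻ x, ∫⁻ t in Ioi (0:ℝ), ENNReal.ofReal (Real.exp (-(t * S x))) ∂volume ∂μ := by
      refine lintegral_congr_ae ?_
      filter_upwards [h0] with x hx
      exact (lint_exp hx).symm
    have e2 : ∫⁻ x, ∫⁻ t in Ioi (0:ℝ), ENNReal.ofReal (Real.exp (-(t * S x))) ∂volume ∂μ
        = ∫⁻ t in Ioi (0:ℝ), ∫⁻ x, ENNReal.ofReal (Real.exp (-(t * S x))) ∂μ ∂volume := by
      refine lintegral_lintegral_swap ?_
      apply Continuous.aemeasurable
      exact ENNReal.continuous_ofReal.comp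
        ((continuous_snd.mul (hSc.comp continuous_fst)).neg.rexp)
    have e3 : ∀ t ∈ Ioi (0:ℝ), ∫⁻ x, ENNReal.ofReal (Real.exp (-(t * S x))) ∂μ
        = ∑' k : ℕ, ENNReal.ofReal (Real.exp (-lam) * lam ^ k / (Nat.factorial k)
            * (1 + 2 * σ2 * t) ^ (-((p:ℝ) / 2) - (k:ℝ))) := by
      intro t ht
      have ht' : (0:ℝ) < t := ht
      have hA1 : (1:ℝ) ≤ 1 + 2 * σ2 * t := by nlinarith
      rw [← ofReal_integral_eq_lintegral_ofReal (pi_exp_sq_integrable p θ hσ2 ht'.le)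
        (Filter.Eventually.of_forall fun x => (Real.exp_pos _).le)]
      have e4 : ∫ x, Real.exp (-(t * S x)) ∂μ
          = Real.exp (-(t * T) / (1 + 2 * σ2 * t)) / Real.sqrt (1 + 2 * σ2 * t) ^ p := by
        rw [hμ, hSdef]
        rw [pi_exp_sq p θ hσ2 t]
        rw [show (∏ i, ∫ y, Real.exp (-(t * y ^ 2)) ∂(gaussianReal (θ i) σ2.toNNReal))
            = ∏ i, (Real.exp (-(t * (θ i) ^ 2) / (1 + 2 * σ2 * t))
                / Real.sqrt (1 + 2 * σ2 * t)) from
          Finset.prod_congr rfl fun i _ => gauss_exp_sq (θ i) hσ2 ht'.le]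
        rw [prod_form]
      rw [e4, step5 p hσ2 ht', ← hlam]
      rw [ENNReal.ofReal_tsum_of_nonneg]
      · exact hterm_nn _ (fun k => Real.rpow_nonneg (by positivity) _)
      · refine summable_ck_mul lam 1 _ (fun k => ?_)
        rw [abs_of_nonneg (Real.rpow_nonneg (by positivity) _)]
        refine Real.rpow_le_one_of_one_le_of_nonpos hA1 ?_
        have : (0:ℝ) ≤ (p:ℝ)/2 := by positivity
        have : (0:ℝ) ≤ (k:ℝ) := Nat.cast_nonneg k
        linarith
    rw [e1, e2]
    rw [setLIntegral_congr_fun_ae measurableSet_Ioi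
      (Filter.Eventually.of_forall e3)]
    rw [lintegral_tsum]
    · -- per-term evaluation
      congr 1
      funext k
      have hs : (1:ℝ) < (p:ℝ)/2 + k := by
        have : (0:ℝ) ≤ (k:ℝ) := Nat.cast_nonneg k
        linarith
      simp_rw [show -((p:ℝ)/2) - (k:ℝ) = -((p:ℝ)/2 + k) by ring]
      rw [← ofReal_integral_eq_lintegral_ofReal]
      · rw [integral_const_mul, integral_one_add_rpow (by positivity) hs]
      · exact ((integrableOn_one_add_rpow (by positivity : (0:ℝ) < 2 * σ2) hs).const_mul _)
      · refine (ae_restrict_iff' measurableSet_Ioi).mpr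
          (Filter.Eventually.of_forall fun x hx => ?_)
        have hx' := (mem_Ioi.mp hx).le
        exact mul_nonneg (by positivity) (Real.rpow_nonneg (by positivity) _)
    · intro k
      refine AEMeasurable.ennreal_ofReal ?_
      refine AEMeasurable.const_mul ?_ _
      refine ContinuousOn.aemeasurable ?_ measurableSet_Ioi
      intro x hx
      have hx' : (0:ℝ) < 1 + 2 * σ2 * x := by
        have := (mem_Ioi.mp hx).le; positivity
      exact ((continuous_const.add (continuous_const.mul continuous_id)).continuousAt.rpow_const
        (Or.inl hx'.ne')).continuousWithinAt
  -- convert to Bochner integral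
  have hmeas : AEStronglyMeasurable (fun x => 1 / S x) μ :=
    (measurable_const.div hSc.measurable).aestronglyMeasurable
  have hnn : 0 ≤ᵐ[μ] fun x => 1 / S x :=
    Filter.Eventually.of_forall fun x => by
      have : (0:ℝ) ≤ S x := Finset.sum_nonneg fun i _ => sq_nonneg _
      positivity
  rw [show (∫ x, 1 / (∑ i, (x i) ^ 2) ∂(normalPi p θ σ2)) = ∫ x, 1 / S x ∂μ from rfl]
  rw [integral_eq_lintegral_of_nonneg_ae hnn hmeas, key]
  have hu_nn : ∀ k : ℕ, (0:ℝ) ≤ 1 / (2 * σ2 * ((p:ℝ)/2 + k - 1)) := by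
    intro k
    have : (0:ℝ) ≤ (k:ℝ) := Nat.cast_nonneg k
    have : (0:ℝ) < (p:ℝ)/2 + k - 1 := by linarith
    positivity
  have hsum2 : Summable (fun k : ℕ => Real.exp (-lam) * lam ^ k / (Nat.factorial k)
      * (1 / (2 * σ2 * ((p:ℝ)/2 + k - 1)))) := by
    refine summable_ck_mul lam (1/σ2) _ (fun k => ?_)
    rw [abs_of_nonneg (hu_nn k)]
    have hk : (0:ℝ) ≤ (k:ℝ) := Nat.cast_nonneg k
    have hd : σ2 ≤ 2 * σ2 * ((p:ℝ)/2 + k - 1) := by nlinarith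
    rw [div_le_div_iff₀ (by nlinarith) hσ2]
    nlinarith
  rw [← ENNReal.ofReal_tsum_of_nonneg (hterm_nn _ hu_nn) hsum2,
    ENNReal.toReal_ofReal (tsum_nonneg (hterm_nn _ hu_nn))]
  rw [← tsum_mul_left]
  refine tsum_congr fun k => ?_
  have hk : (0:ℝ) ≤ (k:ℝ) := Nat.cast_nonneg k
  have hd1 : (0:ℝ) < (p:ℝ) - 2 + 2 * k := by linarith
  have hd2 : (0:ℝ) < (p:ℝ)/2 + k - 1 := by linarith
  rw [show 2 * σ2 * ((p:ℝ)/2 + (k:ℝ) - 1) = σ2 * ((p:ℝ) - 2 + 2 * (k:ℝ)) by ring]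
  rw [one_div, mul_inv]
  ring
end
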